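/- arXiv:math/0511483 — 3 statements merged into one kernel-verified Lean document; each statement's English description precedes it below -/
import Mathlib

section
/- Let α ∈ ℕⁿ be a nonzero multiindex. There is a constant C > 0 such that for all ε ∈ (0, 1/2], ∫_{Δ \ Δ_ε^α} (|ζ₁|⋯|ζₙ|)^{-1} dλ(ζ) ≤ C · ε^{1/(2|α|)} · (log(1/ε))^{n-1}. -/
/-
On `Δ \ Δ_ε^α` write `N = |α|` and factor the weight as
`∏ |ζⱼ|⁻¹ = |ζ^α|^(1/N) · ∏ |ζⱼ|^(-(1 + αⱼ/N)) ≤ ε^(1/(2N)) · ∏ |ζⱼ|^(-(1 + αⱼ/N))`.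
If every `αⱼ < N`, each exponent `1 + αⱼ/N` is `< 2`, so each factor is integrable on the unit
disc and Fubini gives the bound `C ε^(1/(2N))`. Otherwise `α = N eⱼ₀` points in a single
coordinate direction, the region lies in the polydisc whose `j₀`-th radius is `ε^(1/(2N))`, and
`∫_{|z|<R} |z|⁻¹ = 2πR`.
In both cases the factor `log(1/ε)^(n-1) ≥ (log 2)^(n-1)` is only absorbed into the constant.
-/

open MeasureTheory Set

open scoped ENNReal Real

theorem lintegral_fin_nat_prod_eq_prod {n : ℕ} {E : Type*} [MeasurableSpace E]
    {μ : Fin n → Measure E} [∀ i, SigmaFinite (μ i)]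
    {f : Fin n → E → ℝ≥0∞} (hf : ∀ i, Measurable (f i)) :
    ∫⁻ x : Fin n → E, ∏ i, f i (x i) ∂(Measure.pi μ) = ∏ i, ∫⁻ x, f i x ∂(μ i) := by
  induction n with
  | zero => simp
  | succ n ih =>
    calc
      _ = ∫⁻ x : E × (Fin n → E),
            f 0 x.1 * ∏ i : Fin n, f (Fin.succ i) (x.2 i)
            ∂((μ 0).prod (Measure.pi (fun i ↦ μ i.succ))) := by
          rw [← ((measurePreserving_piFinSuccAbove μ 0).symm).lintegral_comp_emb
            (MeasurableEquiv.measurableEmbedding _)]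
          simp_rw [MeasurableEquiv.piFinSuccAbove_symm_apply, Fin.insertNthEquiv,
            Fin.prod_univ_succ, Fin.insertNth_zero, Equiv.coe_fn_mk, Fin.cons_succ,
            Fin.zero_succAbove, cast_eq, Fin.cons_zero]
      _ = (∫⁻ x, f 0 x ∂μ 0) * ∏ i : Fin n, ∫⁻ x, f i.succ x ∂(μ i.succ) := by
          rw [← ih (fun i ↦ hf i.succ), ← lintegral_prod_mul (hf 0).aemeasurable
            (Finset.measurable_prod _ fun i _ ↦
              (hf i.succ).comp (measurable_pi_apply i)).aemeasurable]
      _ = ∏ i, ∫⁻ x, f i x ∂(μ i) := by rw [Fin.prod_univ_succ]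

theorem lintegral_ball_norm_rpow_neg {c R : ℝ} (hc : c < 2) (hR : 0 ≤ R) :
    ∫⁻ z in Metric.ball (0 : ℂ) R, ENNReal.ofReal (‖z‖ ^ (-c)) =
      ENNReal.ofReal (2 * π * R ^ (2 - c) / (2 - c)) := by
  rw [← lintegral_indicator measurableSet_ball, ← Complex.lintegral_comp_polarCoord_symm,
    polarCoord_target]
  have hpolar : ∀ p ∈ Ioi (0 : ℝ) ×ˢ Ioo (-π) π,
      ENNReal.ofReal p.1 •
        (Metric.ball (0 : ℂ) R).indicator (fun z ↦ ENNReal.ofReal (‖z‖ ^ (-c)))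
          (Complex.polarCoord.symm p) =
      (Ioo 0 R).indicator (fun r ↦ ENNReal.ofReal (r ^ (1 - c))) p.1 := by
    -- the Jacobian `r` of polar coordinates turns `|z|^(-c)` into `r^(1-c)`
    rintro ⟨r, θ⟩ ⟨hr : 0 < r, -⟩
    simp only [indicator, Metric.mem_ball, dist_zero_right, Complex.norm_polarCoord_symm,
      abs_of_pos hr, mem_Ioo, hr, true_and, smul_eq_mul]
    split_ifs
    · rw [← ENNReal.ofReal_mul hr.le, sub_eq_add_neg, Real.rpow_add hr, Real.rpow_one]
    · simp
  have hradial : ∫⁻ r in Ioi 0, (Ioo 0 R).indicator (fun r ↦ ENNReal.ofReal (r ^ (1 - c))) r =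
      ENNReal.ofReal (R ^ (2 - c) / (2 - c)) := by
    rw [lintegral_indicator measurableSet_Ioo, Measure.restrict_restrict measurableSet_Ioo,
      inter_eq_left.mpr Ioo_subset_Ioi_self, ← ofReal_integral_eq_lintegral_ofReal,
      integral_Ioc_eq_integral_Ioo.symm, ← intervalIntegral.integral_of_le hR,
      integral_rpow (by left; linarith)]
    · rw [Real.zero_rpow (by linarith)]
      ring_nf
    · exact ((intervalIntegral.intervalIntegrable_rpow' (r := 1 - c) (by linarith)).1.mono_set
        (uIoc_of_le hR ▸ Ioo_subset_Ioc_self))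
    · filter_upwards [ae_restrict_mem measurableSet_Ioo] with r hr
      exact Real.rpow_nonneg hr.1.le _
  rw [setLIntegral_congr_fun (measurableSet_Ioi.prod measurableSet_Ioo) hpolar,
    Measure.volume_eq_prod, ← Measure.prod_restrict,
    lintegral_prod _ (by measurability)]
  simp only [lintegral_const, Measure.restrict_apply_univ, Real.volume_Ioo]
  rw [lintegral_mul_const' _ _ ENNReal.ofReal_ne_top, hradial,
    ← ENNReal.ofReal_mul (div_nonneg (Real.rpow_nonneg hR _) (by linarith))]
  congr 1
  ring

theorem setLIntegral_univ_pi_ball_prod_norm_rpow_neg {n : ℕ} {ρ c : Fin n → ℝ}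
    (hc : ∀ j, c j < 2) (hρ : ∀ j, 0 ≤ ρ j) :
    ∫⁻ ζ in univ.pi (fun j ↦ Metric.ball (0 : ℂ) (ρ j)),
        ∏ j, ENNReal.ofReal (‖ζ j‖ ^ (-c j)) =
      ENNReal.ofReal (∏ j, 2 * π * ρ j ^ (2 - c j) / (2 - c j)) := by
  rw [volume_pi, Measure.restrict_pi_pi, lintegral_fin_nat_prod_eq_prod
      (f := fun j z ↦ ENNReal.ofReal (‖z‖ ^ (-c j))) fun j ↦ by fun_prop,
    ENNReal.ofReal_prod_of_nonneg fun j _ ↦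
      div_nonneg (by have := Real.rpow_nonneg (hρ j) (2 - c j); positivity) (by linarith [hc j])]
  exact Finset.prod_congr rfl fun j _ ↦ lintegral_ball_norm_rpow_neg (hc j) (hρ j)

theorem setLIntegral_le_of_le_mul_prod_norm_rpow {n : ℕ} {S : Set (Fin n → ℂ)}
    {f : (Fin n → ℂ) → ℝ≥0∞} {a : ℝ} {ρ c : Fin n → ℝ} (ha : 0 ≤ a)
    (hc : ∀ j, c j < 2) (hρ : ∀ j, 0 ≤ ρ j)
    (hS : S ⊆ univ.pi (fun j ↦ Metric.ball (0 : ℂ) (ρ j)))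
    (hf : ∀ ζ ∈ S, f ζ ≤ ENNReal.ofReal a * ∏ j, ENNReal.ofReal (‖ζ j‖ ^ (-c j))) :
    ∫⁻ ζ in S, f ζ ≤ ENNReal.ofReal (a * ∏ j, 2 * π * ρ j ^ (2 - c j) / (2 - c j)) :=
  calc ∫⁻ ζ in S, f ζ
      ≤ ∫⁻ ζ in S, ENNReal.ofReal a * ∏ j, ENNReal.ofReal (‖ζ j‖ ^ (-c j)) :=
        setLIntegral_mono (by fun_prop) hf
    _ ≤ ∫⁻ ζ in univ.pi (fun j ↦ Metric.ball (0 : ℂ) (ρ j)),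
          ENNReal.ofReal a * ∏ j, ENNReal.ofReal (‖ζ j‖ ^ (-c j)) := lintegral_mono_set hS
    _ = ENNReal.ofReal (a * ∏ j, 2 * π * ρ j ^ (2 - c j) / (2 - c j)) := by
        rw [lintegral_const_mul' _ _ ENNReal.ofReal_ne_top,
          setLIntegral_univ_pi_ball_prod_norm_rpow_neg hc hρ, ENNReal.ofReal_mul ha]

theorem prod_inv_eq_rpow_mul_prod_rpow {ι : Type*} [Fintype ι] (α : ι → ℕ) (s : ℝ)
    {r : ι → ℝ} (hr : ∀ j, 0 ≤ r j) :
    ∏ j, (r j)⁻¹ = (∏ j, r j ^ α j) ^ s * ∏ j, r j ^ (-(1 + α j * s)) := by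
  rw [← Real.finsetProd_rpow _ _ fun j _ ↦ pow_nonneg (hr j) _, ← Finset.prod_mul_distrib]
  refine Finset.prod_congr rfl fun j _ ↦ ?_
  rw [← Real.rpow_natCast, ← Real.rpow_mul (hr j), ← Real.rpow_add' (hr j) (by norm_num)]
  simp [Real.rpow_neg_one]

/-- The part `Δ \ Δ_ε^α` of the unit polydisc. -/
def monomialSublevel {n : ℕ} (α : Fin n → ℕ) (ε : ℝ) : Set (Fin n → ℂ) :=
  {ζ | (∀ j, ‖ζ j‖ < 1) ∧ ‖∏ j, ζ j ^ α j‖ ^ 2 < ε}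

theorem norm_prod_pow {ι : Type*} [Fintype ι] (α : ι → ℕ) (ζ : ι → ℂ) :
    ‖∏ j, ζ j ^ α j‖ = ∏ j, ‖ζ j‖ ^ α j := by
  simp [norm_prod, norm_pow]

theorem exists_setLIntegral_monomialSublevel_le_of_forall_lt {n : ℕ} (α : Fin n → ℕ)
    {N : ℝ} (hN : 0 < N) (hαN : ∀ j, (α j : ℝ) < N) :
    ∃ C > 0, ∀ ε > 0,
      ∫⁻ ζ in monomialSublevel α ε, ENNReal.ofReal (∏ j, ‖ζ j‖⁻¹) ≤
      ENNReal.ofReal (C * ε ^ (1 / (2 * N))) := by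
  have hc : ∀ j, 1 + α j * N⁻¹ < 2 := fun j ↦ by
    have := (div_lt_one hN).2 (hαN j); rw [div_eq_mul_inv] at this; linarith
  refine ⟨∏ j, 2 * π * 1 ^ (2 - (1 + α j * N⁻¹)) / (2 - (1 + α j * N⁻¹)),
    Finset.prod_pos fun j _ ↦ div_pos (by positivity) (by linarith [hc j]), fun ε hε ↦ ?_⟩
  rw [mul_comm]
  refine setLIntegral_le_of_le_mul_prod_norm_rpow (by positivity) hc (fun _ ↦ zero_le_one)
    (fun ζ hζ j _ ↦ by simpa using hζ.1 j) fun ζ hζ ↦ ?_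
  have hmono : (∏ j, ‖ζ j‖ ^ α j) ^ N⁻¹ ≤ ε ^ (1 / (2 * N)) := by
    have hx : ∏ j, ‖ζ j‖ ^ α j < ε ^ (1 / 2 : ℝ) := by
      rw [← Real.sqrt_eq_rpow, Real.lt_sqrt (by positivity), ← norm_prod_pow]
      exact hζ.2
    calc (∏ j, ‖ζ j‖ ^ α j) ^ N⁻¹ ≤ (ε ^ (1 / 2 : ℝ)) ^ N⁻¹ := by gcongr
      _ = ε ^ (1 / (2 * N)) := by rw [← Real.rpow_mul hε.le]; ring_nf
  rw [prod_inv_eq_rpow_mul_prod_rpow α N⁻¹ fun j ↦ norm_nonneg (ζ j),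
    ENNReal.ofReal_mul (by positivity), ← ENNReal.ofReal_prod_of_nonneg fun j _ ↦ by positivity]
  gcongr

theorem exists_setLIntegral_monomialSublevel_le_of_forall_ne_eq_zero {n : ℕ} (α : Fin n → ℕ)
    (j₀ : Fin n) (hα₀ : α j₀ ≠ 0) (hα : ∀ j ≠ j₀, α j = 0) :
    ∃ C > 0, ∀ ε > 0,
      ∫⁻ ζ in monomialSublevel α ε, ENNReal.ofReal (∏ j, ‖ζ j‖⁻¹) ≤
      ENNReal.ofReal (C * ε ^ (1 / (2 * α j₀ : ℝ))) := by
  refine ⟨(2 * π) ^ n, by positivity, fun ε hε ↦ ?_⟩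
  set R := ε ^ (1 / (2 * α j₀ : ℝ)) with hR_def
  have hR : 0 < R := by positivity
  set ρ : Fin n → ℝ := Function.update 1 j₀ R
  have hS : monomialSublevel α ε ⊆ univ.pi fun j ↦ Metric.ball 0 (ρ j) := by
    rintro ζ ⟨hζ, hζα⟩ j -
    rcases eq_or_ne j j₀ with rfl | hj
    · have : ‖ζ j‖ ^ (2 * α j : ℝ) < ε := by
        rwa [norm_prod_pow, Finset.prod_eq_single j (fun i _ hi ↦ by simp [hα i hi]) (by simp),
          ← pow_mul, mul_comm, ← Real.rpow_natCast, Nat.cast_mul, Nat.cast_two] at hζα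
      have hlt : ‖ζ j‖ < R := by
        rwa [hR_def, one_div, Real.lt_rpow_inv_iff_of_pos (norm_nonneg _) hε.le (by positivity)]
      simpa [ρ] using hlt
    · simpa [ρ, hj] using hζ j
  calc ∫⁻ ζ in monomialSublevel α ε, ENNReal.ofReal (∏ j, ‖ζ j‖⁻¹)
      ≤ ENNReal.ofReal (1 * ∏ j, 2 * π * ρ j ^ (2 - 1 : ℝ) / (2 - 1)) := by
        refine setLIntegral_le_of_le_mul_prod_norm_rpow zero_le_one (c := fun _ ↦ 1)
          (fun _ ↦ by norm_num) (fun j ↦ ?_) hS fun ζ _ ↦ ?_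
        · simp only [ρ, Function.update_apply, Pi.one_apply]
          split_ifs
          exacts [hR.le, zero_le_one]
        · rw [ENNReal.ofReal_one, one_mul,
            ENNReal.ofReal_prod_of_nonneg fun j _ ↦ inv_nonneg.2 (norm_nonneg _)]
          simp [Real.rpow_neg_one]
    _ = ENNReal.ofReal ((2 * π) ^ n * R) := by
        norm_num [Finset.prod_mul_distrib, ρ, Finset.prod_update_of_mem]

open Finset in
theorem forall_lt_sqrt_sum_sq_or_forall_ne_eq_zero {ι : Type*} [Fintype ι] (α : ι → ℕ) :
    (∀ j, (α j : ℝ) < √(∑ i, (α i : ℝ) ^ 2)) ∨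
      ∃ j₀, √(∑ i, (α i : ℝ) ^ 2) = α j₀ ∧ ∀ j ≠ j₀, α j = 0 := by
  classical
  refine or_iff_not_imp_left.2 fun h ↦ ?_
  obtain ⟨j₀, hj₀⟩ := not_forall.1 h
  have hsplit := add_sum_erase univ (fun i ↦ (α i : ℝ) ^ 2) (mem_univ j₀)
  have hsq := (Real.sqrt_le_iff.1 (not_lt.1 hj₀)).2
  have hrest : ∑ i ∈ univ.erase j₀, (α i : ℝ) ^ 2 = 0 :=
    le_antisymm (by linarith) (sum_nonneg fun i _ ↦ sq_nonneg _)
  refine ⟨j₀, by rw [← hsplit, hrest, add_zero, Real.sqrt_sq (Nat.cast_nonneg _)],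
    fun j hj ↦ ?_⟩
  simpa using
    (sum_eq_zero_iff_of_nonneg fun i _ ↦ sq_nonneg _).1 hrest j (mem_erase.2 ⟨hj, mem_univ j⟩)

/-- For a nonzero multiindex α, there is C > 0 such that for all
ε ∈ (0,1/2], the integral of (|ζ₁|⋯|ζₙ|)⁻¹ over Δ \ Δ_ε^α (Δ the unit polydisc,
Δ_ε^α = {ζ ∈ Δ : |ζ^α|² ≥ ε}) is at most C·ε^(1/(2|α|))·(log(1/ε))^(n-1). -/
theorem stmt_4 {n : ℕ} (α : Fin n → ℕ) (hα : α ≠ 0) :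
    ∃ C > (0:ℝ), ∀ ε ∈ Ioc (0:ℝ) (1/2),
      (∫⁻ ζ in {ζ : Fin n → ℂ | (∀ j, ‖ζ j‖ < 1) ∧
          ‖∏ j, ζ j ^ α j‖ ^ 2 < ε},
        ENNReal.ofReal (∏ j, ‖ζ j‖⁻¹)) ≤
      ENNReal.ofReal (C * ε ^ (1 / (2 * Real.sqrt (∑ j, (α j : ℝ) ^ 2))) *
        (Real.log (1/ε)) ^ (n - 1)) := by
  obtain ⟨C, hC, hbound⟩ : ∃ C > 0, ∀ ε > 0,
      ∫⁻ ζ in monomialSublevel α ε, ENNReal.ofReal (∏ j, ‖ζ j‖⁻¹) ≤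
        ENNReal.ofReal (C * ε ^ (1 / (2 * √(∑ j, (α j : ℝ) ^ 2)))) := by
    obtain ⟨j, hj⟩ := Function.ne_iff.1 hα
    rcases forall_lt_sqrt_sum_sq_or_forall_ne_eq_zero α with hlt | ⟨j₀, hN, hj₀⟩
    · exact exists_setLIntegral_monomialSublevel_le_of_forall_lt α
        ((Nat.cast_nonneg _).trans_lt (hlt j)) hlt
    · rw [hN]
      exact exists_setLIntegral_monomialSublevel_le_of_forall_ne_eq_zero α j₀
        (fun h ↦ hj (by by_cases hjj : j = j₀ <;> simp [*])) hj₀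
  refine ⟨C / Real.log 2 ^ (n - 1), by positivity, fun ε ⟨hε, hε2⟩ ↦
    (hbound ε hε).trans (ENNReal.ofReal_le_ofReal ?_)⟩
  have hlog : Real.log 2 ≤ Real.log (1 / ε) :=
    Real.log_le_log two_pos (by rw [le_div_iff₀ hε]; linarith)
  calc C * ε ^ (1 / (2 * √(∑ j, (α j : ℝ) ^ 2)))
      = C / Real.log 2 ^ (n - 1) * ε ^ (1 / (2 * √(∑ j, (α j : ℝ) ^ 2))) *
          Real.log 2 ^ (n - 1) := by
        field_simp
    _ ≤ _ := by gcongr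
end

section
/- Let α, β ∈ ℕⁿ be nonzero multiindices and let ω > 0 satisfy 2ω < min(1/|α|, 1/|β|). There is a constant C > 0 such that for all ε₁, ε₂ ∈ (0, 1], ∫_{Δ^{α,β}_{ε₁,ε₂}} (ε₁/|ζ^α|² + ε₂/|ζ^β|²) · (|ζ₁|⋯|ζₙ|)^{-1} dλ(ζ) ≤ C · |(ε₁, ε₂)|^ω, where |(ε₁, ε₂)| = (ε₁² + ε₂²)^{1/2}. -/
open MeasureTheory Set

/-!
On the region where `ε ≤ |ζ^α|²` and for `ω ≤ 1`, `ε / |ζ^α|² ≤ ε^ω |ζ^α|^(-2ω)`. Hence the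
`α`-part of the integrand is at most `ε^ω ∏ⱼ |ζⱼ|^(-(2ωαⱼ + 1))`, a product of functions each
of which is integrable on the unit disc of `ℂ ≅ ℝ²` because its exponent exceeds `-2`, i.e.
because `2ωαⱼ ≤ 2ω|α| < 1`. The same holds for `β`, and `εᵢ ≤ |(ε₁, ε₂)|`.
-/

open Metric

lemma div_le_rpow_mul_rpow_neg {ε X ω : ℝ} (hε : 0 < ε) (hεX : ε ≤ X) (hω : ω ≤ 1) :
    ε / X ≤ ε ^ ω * X ^ (-ω) := by
  have hX : 0 < X := hε.trans_le hεX
  calc ε / X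
      = ε ^ ω * ε ^ (1 - ω) / X := by rw [← Real.rpow_add hε, add_sub_cancel, Real.rpow_one]
    _ ≤ ε ^ ω * X ^ (1 - ω) / X := by gcongr
    _ = ε ^ ω * X ^ (-ω) := by
      rw [Real.rpow_sub hX, Real.rpow_neg hX.le, Real.rpow_one]; field_simp

lemma setLIntegral_ofReal_add_le {α : Type*} [MeasurableSpace α] {μ : Measure α}
    {s s₁ s₂ : Set α} {f g : α → ℝ} (hf : Measurable f) (h₁ : s ⊆ s₁) (h₂ : s ⊆ s₂) :
    ∫⁻ x in s, ENNReal.ofReal (f x + g x) ∂μ ≤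
      ∫⁻ x in s₁, ENNReal.ofReal (f x) ∂μ + ∫⁻ x in s₂, ENNReal.ofReal (g x) ∂μ :=
  calc ∫⁻ x in s, ENNReal.ofReal (f x + g x) ∂μ
      ≤ ∫⁻ x in s, ENNReal.ofReal (f x) + ENNReal.ofReal (g x) ∂μ :=
        lintegral_mono fun _ => ENNReal.ofReal_add_le
    _ = ∫⁻ x in s, ENNReal.ofReal (f x) ∂μ + ∫⁻ x in s, ENNReal.ofReal (g x) ∂μ :=
        lintegral_add_left hf.ennreal_ofReal _
    _ ≤ _ := add_le_add (lintegral_mono_set h₁) (lintegral_mono_set h₂)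

lemma mul_rpow_add_mul_rpow_le {C₁ C₂ ε₁ ε₂ ω : ℝ} (hC₁ : 0 ≤ C₁) (hC₂ : 0 ≤ C₂)
    (hε₁ : 0 ≤ ε₁) (hε₂ : 0 ≤ ε₂) (hω : 0 ≤ ω) :
    C₁ * ε₁ ^ ω + C₂ * ε₂ ^ ω ≤ (C₁ + C₂) * √(ε₁ ^ 2 + ε₂ ^ 2) ^ ω := by
  have h₁ : ε₁ ^ ω ≤ √(ε₁ ^ 2 + ε₂ ^ 2) ^ ω :=
    Real.rpow_le_rpow hε₁ (Real.le_sqrt_of_sq_le (by nlinarith)) hω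
  have h₂ : ε₂ ^ ω ≤ √(ε₁ ^ 2 + ε₂ ^ 2) ^ ω :=
    Real.rpow_le_rpow hε₂ (Real.le_sqrt_of_sq_le (by nlinarith)) hω
  rw [add_mul]
  gcongr

section Disc

variable {E : Type*} [NormedAddCommGroup E] [NormedSpace ℝ E] [FiniteDimensional ℝ E]
  [MeasurableSpace E] [BorelSpace E] (μ : Measure E) [μ.IsAddHaarMeasure]

lemma integrableOn_ball_norm_rpow (hd : 1 ≤ Module.finrank ℝ E) {s : ℝ}
    (hs : -(Module.finrank ℝ E : ℝ) < s) (r : ℝ) :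
    IntegrableOn (fun x : E => ‖x‖ ^ s) (ball 0 r) μ :=
  integrableOn_ball_of_norm_le_rpow (C := 1) (α := -s) hd (by linarith)
    (ae_of_all _ fun x => by simp [abs_of_nonneg (Real.rpow_nonneg (norm_nonneg x) s)])
    (by fun_prop : Measurable fun x : E => ‖x‖ ^ s).aestronglyMeasurable

end Disc

section Polydisc

variable {ι : Type*} [Fintype ι]

lemma integrableOn_polydisc_prod_norm_rpow {s : ι → ℝ} (hs : ∀ j, -2 < s j) :
    IntegrableOn (fun ζ : ι → ℂ => ∏ j, ‖ζ j‖ ^ s j) (univ.pi fun _ => ball 0 1) := by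
  rw [IntegrableOn, volume_pi, Measure.restrict_pi_pi]
  exact Integrable.fintype_prod fun j =>
    integrableOn_ball_norm_rpow volume (by simp) (by simpa using hs j) 1

lemma norm_prod_pow_sq_rpow_mul_prod_inv {ζ : ι → ℂ} (hζ : ∀ j, ζ j ≠ 0) (α : ι → ℕ) (ω : ℝ) :
    (‖∏ j, ζ j ^ α j‖ ^ 2) ^ (-ω) * ∏ j, ‖ζ j‖⁻¹ = ∏ j, ‖ζ j‖ ^ (-(2 * ω * α j + 1)) := by
  have hpos : ∀ j, 0 < ‖ζ j‖ := fun j => norm_pos_iff.mpr (hζ j)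
  rw [norm_prod, ← Finset.prod_pow, ← Real.finsetProd_rpow _ _ fun j _ => by positivity,
    ← Finset.prod_mul_distrib]
  refine Finset.prod_congr rfl fun j _ => ?_
  rw [norm_pow, ← pow_mul, ← Real.rpow_natCast, ← Real.rpow_mul (hpos j).le,
    ← Real.rpow_neg_one, ← Real.rpow_add (hpos j)]
  congr 1
  push_cast
  ring

lemma div_norm_prod_pow_sq_mul_prod_inv_le {ζ : ι → ℂ} {α : ι → ℕ} {ε ω : ℝ} (hε : 0 < ε)
    (hω : ω ≤ 1) (hεζ : ε ≤ ‖∏ j, ζ j ^ α j‖ ^ 2) :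
    ε / ‖∏ j, ζ j ^ α j‖ ^ 2 * ∏ j, ‖ζ j‖⁻¹ ≤ ε ^ ω * ∏ j, ‖ζ j‖ ^ (-(2 * ω * α j + 1)) := by
  by_cases hζ : ∀ j, ζ j ≠ 0
  · calc ε / ‖∏ j, ζ j ^ α j‖ ^ 2 * ∏ j, ‖ζ j‖⁻¹
        ≤ ε ^ ω * (‖∏ j, ζ j ^ α j‖ ^ 2) ^ (-ω) * ∏ j, ‖ζ j‖⁻¹ := by
          gcongr
          exact div_le_rpow_mul_rpow_neg hε hεζ hω
      _ = ε ^ ω * ∏ j, ‖ζ j‖ ^ (-(2 * ω * α j + 1)) := by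
          rw [mul_assoc, norm_prod_pow_sq_rpow_mul_prod_inv hζ]
  · -- some `ζ j = 0`, so `∏ j, ‖ζ j‖⁻¹ = 0` because `0⁻¹ = 0` in Lean
    push Not at hζ
    obtain ⟨j, hj⟩ := hζ
    rw [Finset.prod_eq_zero (f := fun j => ‖ζ j‖⁻¹) (Finset.mem_univ j) (by simp [hj]), mul_zero]
    positivity

lemma exists_setLIntegral_div_norm_prod_pow_sq_le (α : ι → ℕ) {ω : ℝ} (hω : ω ≤ 1)
    (hα : ∀ j, 2 * ω * α j < 1) :
    ∃ C > (0 : ℝ), ∀ ε > (0 : ℝ),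
      ∫⁻ ζ in {ζ : ι → ℂ | (∀ j, ‖ζ j‖ < 1) ∧ ε ≤ ‖∏ j, ζ j ^ α j‖ ^ 2},
        ENNReal.ofReal (ε / ‖∏ j, ζ j ^ α j‖ ^ 2 * ∏ j, ‖ζ j‖⁻¹) ≤
      ENNReal.ofReal (C * ε ^ ω) := by
  set w : (ι → ℂ) → ℝ := fun ζ => ∏ j, ‖ζ j‖ ^ (-(2 * ω * α j + 1))
  set P : Set (ι → ℂ) := univ.pi fun _ => ball 0 1
  have hw : IntegrableOn w P := integrableOn_polydisc_prod_norm_rpow fun j => by linarith [hα j]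
  have hI : 0 ≤ ∫ ζ in P, w ζ := integral_nonneg fun ζ => by positivity
  refine ⟨(∫ ζ in P, w ζ) + 1, by positivity, fun ε hε => ?_⟩
  calc ∫⁻ ζ in {ζ : ι → ℂ | (∀ j, ‖ζ j‖ < 1) ∧ ε ≤ ‖∏ j, ζ j ^ α j‖ ^ 2},
        ENNReal.ofReal (ε / ‖∏ j, ζ j ^ α j‖ ^ 2 * ∏ j, ‖ζ j‖⁻¹)
      ≤ ∫⁻ ζ in {ζ : ι → ℂ | (∀ j, ‖ζ j‖ < 1) ∧ ε ≤ ‖∏ j, ζ j ^ α j‖ ^ 2},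
          ENNReal.ofReal (ε ^ ω * w ζ) :=
        setLIntegral_mono (by fun_prop) fun ζ hζ =>
          ENNReal.ofReal_le_ofReal (div_norm_prod_pow_sq_mul_prod_inv_le hε hω hζ.2)
    _ ≤ ∫⁻ ζ in P, ENNReal.ofReal (ε ^ ω * w ζ) :=
        lintegral_mono_set fun ζ hζ j _ => by simpa using hζ.1 j
    _ = ENNReal.ofReal (ε ^ ω * ∫ ζ in P, w ζ) := by
        rw [← integral_const_mul, ofReal_integral_eq_lintegral_ofReal (hw.const_mul _)
          (ae_of_all _ fun ζ => by positivity)]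
    _ ≤ ENNReal.ofReal (((∫ ζ in P, w ζ) + 1) * ε ^ ω) :=
        ENNReal.ofReal_le_ofReal (by nlinarith [Real.rpow_nonneg hε.le ω])

noncomputable def multiIndexNorm (α : ι → ℕ) : ℝ := √(∑ j, (α j : ℝ) ^ 2)

lemma le_multiIndexNorm (α : ι → ℕ) (j : ι) : (α j : ℝ) ≤ multiIndexNorm α :=
  Real.le_sqrt_of_sq_le <|
    Finset.single_le_sum (f := fun i => (α i : ℝ) ^ 2) (fun _ _ => sq_nonneg _) (Finset.mem_univ j)

lemma one_le_multiIndexNorm {α : ι → ℕ} (h : 0 < multiIndexNorm α) : 1 ≤ multiIndexNorm α := by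
  obtain ⟨j, hj⟩ : ∃ j, α j ≠ 0 := by
    by_contra! hα
    simp [multiIndexNorm, hα] at h
  exact le_trans (mod_cast Nat.one_le_iff_ne_zero.mpr hj) (le_multiIndexNorm α j)

lemma le_one_and_two_mul_mul_lt_one_of_lt_one_div_multiIndexNorm {α : ι → ℕ} {ω : ℝ}
    (hω : 0 < ω) (h : 2 * ω < 1 / multiIndexNorm α) : ω ≤ 1 ∧ ∀ j, 2 * ω * α j < 1 := by
  have hpos : 0 < multiIndexNorm α := one_div_pos.mp (by linarith)
  have hlt : 2 * ω * multiIndexNorm α < 1 := (lt_div_iff₀ hpos).mp h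
  have hone := one_le_multiIndexNorm hpos
  refine ⟨by nlinarith, fun j => ?_⟩
  nlinarith [le_multiIndexNorm α j]

end Polydisc

theorem stmt_7_general {n : ℕ} (α β : Fin n → ℕ) (ω : ℝ) (hω : 0 < ω)
    (hω2 : 2 * ω < min (1 / Real.sqrt (∑ j, (α j : ℝ) ^ 2))
      (1 / Real.sqrt (∑ j, (β j : ℝ) ^ 2))) :
    ∃ C > (0:ℝ), ∀ ε₁ ∈ Ioc (0:ℝ) 1, ∀ ε₂ ∈ Ioc (0:ℝ) 1,
      (∫⁻ ζ in {ζ : Fin n → ℂ | (∀ j, ‖ζ j‖ < 1) ∧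
          ε₁ ≤ ‖∏ j, ζ j ^ α j‖ ^ 2 ∧
          ε₂ ≤ ‖∏ j, ζ j ^ β j‖ ^ 2},
        ENNReal.ofReal ((ε₁ / ‖∏ j, ζ j ^ α j‖ ^ 2 +
            ε₂ / ‖∏ j, ζ j ^ β j‖ ^ 2) *
          ∏ j, (‖ζ j‖)⁻¹)) ≤
      ENNReal.ofReal (C * Real.sqrt (ε₁ ^ 2 + ε₂ ^ 2) ^ ω) := by
  obtain ⟨hωα, hα⟩ := le_one_and_two_mul_mul_lt_one_of_lt_one_div_multiIndexNorm (α := α) hω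
    (hω2.trans_le (min_le_left _ _))
  obtain ⟨hωβ, hβ⟩ := le_one_and_two_mul_mul_lt_one_of_lt_one_div_multiIndexNorm (α := β) hω
    (hω2.trans_le (min_le_right _ _))
  obtain ⟨C₁, hC₁, h₁⟩ := exists_setLIntegral_div_norm_prod_pow_sq_le α hωα hα
  obtain ⟨C₂, hC₂, h₂⟩ := exists_setLIntegral_div_norm_prod_pow_sq_le β hωβ hβ
  refine ⟨C₁ + C₂, by positivity, ?_⟩
  rintro ε₁ ⟨hε₁, -⟩ ε₂ ⟨hε₂, -⟩
  conv_lhs => simp only [add_mul]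
  refine (setLIntegral_ofReal_add_le (by fun_prop) ?_ ?_).trans
    ((add_le_add (h₁ ε₁ hε₁) (h₂ ε₂ hε₂)).trans ?_)
  · exact fun ζ hζ => ⟨hζ.1, hζ.2.1⟩
  · exact fun ζ hζ => ⟨hζ.1, hζ.2.2⟩
  rw [← ENNReal.ofReal_add (by positivity) (by positivity)]
  exact ENNReal.ofReal_le_ofReal
    (mul_rpow_add_mul_rpow_le hC₁.le hC₂.le hε₁.le hε₂.le hω.le)

/-- For nonzero multiindices α, β and 0 < ω with 2ω < min(1/|α|, 1/|β|),
there is C > 0 such that for all ε₁, ε₂ ∈ (0,1], the integral of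
(ε₁/|ζ^α|² + ε₂/|ζ^β|²)·(|ζ₁|⋯|ζₙ|)⁻¹ over Δ^{α,β}_{ε₁,ε₂} is at most C·|(ε₁,ε₂)|^ω. -/
theorem stmt_7 {n : ℕ} (α β : Fin n → ℕ) (hα : α ≠ 0) (hβ : β ≠ 0) (ω : ℝ) (hω : 0 < ω)
    (hω2 : 2 * ω < min (1 / Real.sqrt (∑ j, (α j : ℝ) ^ 2))
      (1 / Real.sqrt (∑ j, (β j : ℝ) ^ 2))) :
    ∃ C > (0:ℝ), ∀ ε₁ ∈ Ioc (0:ℝ) 1, ∀ ε₂ ∈ Ioc (0:ℝ) 1,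
      (∫⁻ ζ in {ζ : Fin n → ℂ | (∀ j, ‖ζ j‖ < 1) ∧
          ε₁ ≤ ‖∏ j, ζ j ^ α j‖ ^ 2 ∧
          ε₂ ≤ ‖∏ j, ζ j ^ β j‖ ^ 2},
        ENNReal.ofReal ((ε₁ / ‖∏ j, ζ j ^ α j‖ ^ 2 +
            ε₂ / ‖∏ j, ζ j ^ β j‖ ^ 2) *
          ∏ j, (‖ζ j‖)⁻¹)) ≤
      ENNReal.ofReal (C * Real.sqrt (ε₁ ^ 2 + ε₂ ^ 2) ^ ω) :=
  stmt_7_general α β ω hω hω2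
end

section
/- Let Δ be the open unit polydisc in ℂ². There is a constant C > 0 such that for all ε ∈ (0,1], ∫_Δ (1/|ζ₁|) · (|ζ₁|⁸/ε) / (1 + |ζ₁|⁸/ε)² dλ(ζ) ≤ C · ε^{1/8}. -/
/-!
Since the integrand depends only on `ζ₁`, the integral is at most `π` times the integral over
all of `ℂ`. The substitution `ζ₁ = ε^{1/8} w` turns the integrand into `ε^{-1/8} h(w)` and the area
element into `ε^{1/4} dw`, so that integral equals `ε^{1/8} ∫_ℂ h`, where
`h(w) = |w|⁷ / (1 + |w|⁸)²` is integrable because it is `O(|w|⁻⁹)` at infinity.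
-/

open MeasureTheory Set Module
open scoped ENNReal

theorem inv_mul_div_one_add_sq_le {r : ℝ} (hr : 0 ≤ r) {p : ℕ} (hp : p ≠ 0) :
    r⁻¹ * (r ^ p / (1 + r ^ p) ^ 2) ≤ 2 ^ (p + 1) * (1 + r) ^ (-(p + 1 : ℝ)) := by
  obtain ⟨q, rfl⟩ := Nat.exists_eq_succ_of_ne_zero hp
  rcases hr.eq_or_lt with rfl | hr_pos
  · simp only [inv_zero, zero_mul]
    positivity
  have hlhs : r⁻¹ * (r ^ (q + 1) / (1 + r ^ (q + 1)) ^ 2) = r ^ q / (1 + r ^ (q + 1)) ^ 2 := by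
    field_simp
    ring
  have hrhs : (1 + r) ^ (-(↑(q + 1) + 1 : ℝ)) = ((1 + r) ^ (q + 2))⁻¹ := by
    rw [Real.rpow_neg (by positivity), ← Real.rpow_natCast]
    push_cast
    ring_nf
  rw [hlhs, hrhs, ← div_eq_mul_inv, div_le_div_iff₀ (by positivity) (by positivity)]
  rcases le_total r 1 with hr1 | hr1
  · calc r ^ q * (1 + r) ^ (q + 2) ≤ 1 * 2 ^ (q + 2) := by
          gcongr
          · exact pow_le_one₀ hr hr1
          · linarith
      _ ≤ 2 ^ (q + 1 + 1) * (1 + r ^ (q + 1)) ^ 2 := by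
          rw [one_mul]
          exact le_mul_of_one_le_right (by positivity)
            (one_le_pow₀ (le_add_of_nonneg_right (by positivity)))
  · calc r ^ q * (1 + r) ^ (q + 2) ≤ r ^ q * (2 * r) ^ (q + 2) := by gcongr; linarith
      _ = 2 ^ (q + 1 + 1) * (r ^ (q + 1)) ^ 2 := by ring
      _ ≤ 2 ^ (q + 1 + 1) * (1 + r ^ (q + 1)) ^ 2 := by gcongr; linarith

section AddHaar

variable {E : Type*} [NormedAddCommGroup E] [NormedSpace ℝ E] [MeasurableSpace E] [BorelSpace E]
  [FiniteDimensional ℝ E] (μ : Measure E) [μ.IsAddHaarMeasure]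

theorem lintegral_comp_smul_of_pos (f : E → ℝ≥0∞) {R : ℝ} (hR : 0 < R) :
    ∫⁻ x, f (R • x) ∂μ = ENNReal.ofReal (R ^ finrank ℝ E)⁻¹ * ∫⁻ x, f x ∂μ := by
  calc ∫⁻ x, f (R • x) ∂μ = ∫⁻ x, f x ∂Measure.map (R • ·) μ :=
        (lintegral_map_equiv f
          (Homeomorph.smul (isUnit_iff_ne_zero.2 hR.ne').unit).toMeasurableEquiv).symm
    _ = _ := by
      rw [Measure.map_addHaar_smul μ hR.ne', lintegral_smul_measure,
        abs_of_pos (by positivity), smul_eq_mul]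

theorem lintegral_inv_norm_mul_comp_pow_div (g : ℝ → ℝ) {p : ℕ} (hp : p ≠ 0) {ε : ℝ}
    (hε : 0 < ε) :
    ∫⁻ x, ENNReal.ofReal (‖x‖⁻¹ * g (‖x‖ ^ p / ε)) ∂μ =
      ENNReal.ofReal (ε ^ (((finrank ℝ E : ℝ) - 1) / p)) *
        ∫⁻ x, ENNReal.ofReal (‖x‖⁻¹ * g (‖x‖ ^ p)) ∂μ := by
  set c : ℝ := ε ^ (-(1 / p : ℝ)) with hc
  have hc0 : 0 < c := Real.rpow_pos_of_pos hε _
  have hcp : c ^ p = ε⁻¹ := by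
    rw [hc, ← Real.rpow_natCast, ← Real.rpow_mul hε.le, neg_mul, one_div,
      inv_mul_cancel₀ (by exact_mod_cast hp), Real.rpow_neg_one]
  have hpoint : ∀ x : E, ENNReal.ofReal (‖x‖⁻¹ * g (‖x‖ ^ p / ε)) =
      ENNReal.ofReal c * ENNReal.ofReal (‖c • x‖⁻¹ * g (‖c • x‖ ^ p)) := by
    intro x
    rw [← ENNReal.ofReal_mul hc0.le, norm_smul, Real.norm_of_nonneg hc0.le, mul_pow, hcp,
      mul_inv, mul_assoc, mul_inv_cancel_left₀ hc0.ne', mul_comm ε⁻¹, ← div_eq_mul_inv]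
  simp_rw [hpoint]
  rw [lintegral_const_mul' _ _ ENNReal.ofReal_ne_top,
    lintegral_comp_smul_of_pos μ (fun x => ENNReal.ofReal (‖x‖⁻¹ * g (‖x‖ ^ p))) hc0,
    ← mul_assoc, ← ENNReal.ofReal_mul hc0.le]
  congr 2
  rw [hc, ← Real.rpow_natCast, ← Real.rpow_mul hε.le, ← Real.rpow_neg hε.le,
    ← Real.rpow_add hε]
  congr 1
  ring

theorem lintegral_inv_norm_mul_div_one_add_sq_lt_top {p : ℕ} (hp : p ≠ 0)
    (hE : finrank ℝ E < p + 1) :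
    ∫⁻ x, ENNReal.ofReal (‖x‖⁻¹ * (‖x‖ ^ p / (1 + ‖x‖ ^ p) ^ 2)) ∂μ < ∞ := by
  have hint : Integrable (fun x : E => 2 ^ (p + 1) * (1 + ‖x‖) ^ (-(p + 1 : ℝ))) μ :=
    (integrable_one_add_norm (by exact_mod_cast hE)).const_mul _
  refine lt_of_le_of_lt (lintegral_mono fun x => ?_) hint.lintegral_lt_top
  exact ENNReal.ofReal_le_ofReal (inv_mul_div_one_add_sq_le (norm_nonneg x) hp)

end AddHaar

theorem setLIntegral_prod_comp_fst {α β : Type*} [MeasurableSpace α] [MeasurableSpace β]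
    (μ : Measure α) (ν : Measure β) [SFinite μ] [SFinite ν] {f : α → ℝ≥0∞} (hf : Measurable f)
    (s : Set α) (t : Set β) :
    ∫⁻ z in s ×ˢ t, f z.1 ∂μ.prod ν = ν t * ∫⁻ x in s, f x ∂μ := by
  rw [setLIntegral_prod (fun z => f z.1) (hf.comp measurable_fst).aemeasurable]
  simp_rw [setLIntegral_const]
  rw [lintegral_mul_const _ hf, mul_comm]

/-- There is C > 0 such that for all ε ∈ (0,1],
∫_Δ (1/|ζ₁|)·(|ζ₁|⁸/ε)/(1+|ζ₁|⁸/ε)² dλ(ζ) ≤ C·ε^(1/8), where Δ is the open unit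
polydisc in ℂ². -/
theorem stmt_18 :
    ∃ C > (0:ℝ), ∀ ε ∈ Ioc (0:ℝ) 1,
      (∫⁻ ζ in {ζ : ℂ × ℂ | ‖ζ.1‖ < 1 ∧ ‖ζ.2‖ < 1},
        ENNReal.ofReal ((‖ζ.1‖)⁻¹ * (‖ζ.1‖ ^ 8 / ε) /
          (1 + ‖ζ.1‖ ^ 8 / ε) ^ 2)) ≤
      ENNReal.ofReal (C * ε ^ ((1:ℝ)/8)) := by
  set K := ∫⁻ z : ℂ, ENNReal.ofReal (‖z‖⁻¹ * (‖z‖ ^ 8 / (1 + ‖z‖ ^ 8) ^ 2))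
  have hK : K ≠ ∞ :=
    (lintegral_inv_norm_mul_div_one_add_sq_lt_top volume (by norm_num) (by simp)).ne
  refine ⟨Real.pi * K.toReal + 1, by positivity, ?_⟩
  rintro ε ⟨hε0, -⟩
  set F : ℂ → ℝ≥0∞ := fun z => ENNReal.ofReal (‖z‖⁻¹ * (‖z‖ ^ 8 / ε / (1 + ‖z‖ ^ 8 / ε) ^ 2))
  have hpolydisc : {ζ : ℂ × ℂ | ‖ζ.1‖ < 1 ∧ ‖ζ.2‖ < 1} =
      Metric.ball 0 1 ×ˢ Metric.ball 0 1 := by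
    ext
    simp
  have hscale : ∫⁻ z, F z = ENNReal.ofReal (ε ^ ((1:ℝ)/8)) * K := by
    convert lintegral_inv_norm_mul_comp_pow_div (volume : Measure ℂ)
      (fun t => t / (1 + t) ^ 2) (p := 8) (by norm_num) hε0 using 4
    rw [Complex.finrank_real_complex]
    norm_num
  simp_rw [hpolydisc, mul_div_assoc]
  calc ∫⁻ ζ in Metric.ball (0:ℂ) 1 ×ˢ Metric.ball (0:ℂ) 1, F ζ.1
      = ENNReal.ofReal Real.pi * ∫⁻ z in Metric.ball 0 1, F z := by
        rw [Measure.volume_eq_prod, setLIntegral_prod_comp_fst _ _ (by fun_prop),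
          Complex.volume_ball, ENNReal.ofReal_one, one_pow, one_mul,
          ← ENNReal.ofReal_coe_nnreal, NNReal.coe_real_pi]
    _ ≤ ENNReal.ofReal Real.pi * ∫⁻ z, F z := by
        gcongr
        exact Measure.restrict_le_self
    _ = ENNReal.ofReal (Real.pi * ε ^ ((1:ℝ)/8) * K.toReal) := by
        rw [hscale, ENNReal.ofReal_mul (by positivity), ENNReal.ofReal_mul (by positivity),
          ENNReal.ofReal_toReal hK, mul_assoc]
    _ ≤ ENNReal.ofReal ((Real.pi * K.toReal + 1) * ε ^ ((1:ℝ)/8)) := by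
        rw [add_mul, one_mul, mul_right_comm]
        exact ENNReal.ofReal_le_ofReal (le_add_of_nonneg_right (by positivity))
end
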